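/- Let σ > 0, 0 < ρ ≤ 1, C > 0, suppose ∅ ≠ Ω ⊆ {(y, η) ∈ ℝ^d × ℝ^d : ⟨η⟩ ≤ C ⟨y⟩^σ}, and let φ be a nonzero Schwartz function on ℝ^d. Let δ₀ be the Dirac tempered distribution g ↦ g(0). Then there exists ε > 0 such that for every N ≥ 0 one has sup_{z ∈ Ω_{ρ,ε}} ⟨z⟩^N |V_φ δ₀(z)| < ∞. -/

import Mathlib

open scoped Real

variable {d : ℕ}

/-- The anisotropic weight `θ_σ(x,ξ) = 1 + ‖x‖ + ‖ξ‖^{1/σ}`. -/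
noncomputable def theta (d : ℕ) (σ : ℝ)
    (z : EuclideanSpace ℝ (Fin d) × EuclideanSpace ℝ (Fin d)) : ℝ :=
  1 + ‖z.1‖ + ‖z.2‖ ^ (1 / σ)

/-- The anisotropic neighborhood `Ω_{ρ,ε}` (with anisotropy parameter `σ`). -/
noncomputable def aniso (d : ℕ) (σ ρ ε : ℝ)
    (Ω : Set (EuclideanSpace ℝ (Fin d) × EuclideanSpace ℝ (Fin d))) :
    Set (EuclideanSpace ℝ (Fin d) × EuclideanSpace ℝ (Fin d)) :=
  {z | ∃ w ∈ Ω, ‖z.1 - w.1‖ < ε * theta d σ w ^ ρ ∧ ‖z.2 - w.2‖ < ε * theta d σ w ^ (ρ * σ)}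

/-- The constant `C_τ` in the quasi-triangle inequality. -/
noncomputable def Cq (τ : ℝ) : ℝ := if 1 ≤ τ then 1 else 2 ^ (1 / τ - 1)

/-- Euclidean norm of a pair. -/
noncomputable def pairNorm (z : EuclideanSpace ℝ (Fin d) × EuclideanSpace ℝ (Fin d)) : ℝ :=
  Real.sqrt (‖z.1‖ ^ 2 + ‖z.2‖ ^ 2)

/-- The bracket `⟨z⟩ = (1 + ‖z‖²)^{1/2}` for a pair (Euclidean norm). -/
noncomputable def pairBracket (z : EuclideanSpace ℝ (Fin d) × EuclideanSpace ℝ (Fin d)) : ℝ :=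
  Real.sqrt (1 + (‖z.1‖ ^ 2 + ‖z.2‖ ^ 2))

/-- Directional derivative. -/
noncomputable def dirDeriv {V F : Type*} [NormedAddCommGroup V] [NormedSpace ℝ V]
    [NormedAddCommGroup F] [NormedSpace ℝ F] (v : V) (f : V → F) : V → F :=
  fun x => fderiv ℝ f x v

/-- Iterated directional derivative along a list of directions. -/
noncomputable def listDeriv {V F : Type*} [NormedAddCommGroup V] [NormedSpace ℝ V]
    [NormedAddCommGroup F] [NormedSpace ℝ F] : List V → (V → F) → (V → F)
  | [], f => f
  | v :: vs, f => dirDeriv v (listDeriv vs f)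

/-- The directions realizing the partial derivative `∂_x^α ∂_ξ^β`. -/
noncomputable def mdirs (d : ℕ) (α β : Fin d → ℕ) :
    List (EuclideanSpace ℝ (Fin d) × EuclideanSpace ℝ (Fin d)) :=
  ((List.finRange d).flatMap fun i =>
      List.replicate (α i) ((EuclideanSpace.single i (1 : ℝ), 0))) ++
  ((List.finRange d).flatMap fun i =>
      List.replicate (β i) ((0, EuclideanSpace.single i (1 : ℝ))))

/-- Membership in the anisotropic Shubin symbol class `G_ρ^{r,σ}`. -/
def ShubinG {F : Type*} [NormedAddCommGroup F] [NormedSpace ℝ F]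
    (d : ℕ) (ρ r σ : ℝ)
    (a : EuclideanSpace ℝ (Fin d) × EuclideanSpace ℝ (Fin d) → F) : Prop :=
  ContDiff ℝ (⊤ : ℕ∞) a ∧
    ∀ α β : Fin d → ℕ, ∃ C > 0, ∀ z,
      ‖listDeriv (mdirs d α β) a z‖ ≤
        C * theta d σ z ^ (r - ρ * ((∑ i, (α i : ℝ)) + σ * ∑ i, (β i : ℝ)))

/-- `a` is elliptic in `Γ` (order `r`, parameter `σ`). -/
def EllipticIn (d : ℕ) (σ r : ℝ)
    (a : EuclideanSpace ℝ (Fin d) × EuclideanSpace ℝ (Fin d) → ℂ)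
    (Γ : Set (EuclideanSpace ℝ (Fin d) × EuclideanSpace ℝ (Fin d))) : Prop :=
  ∃ C > 0, ∃ R > 0, ∀ z ∈ Γ, R ≤ pairNorm z → C * theta d σ z ^ r ≤ ‖a z‖

/-- `V` is the short-time Fourier transform `V_φ u`. -/
def IsSTFT (d : ℕ) (φ : SchwartzMap (EuclideanSpace ℝ (Fin d)) ℂ)
    (u : SchwartzMap (EuclideanSpace ℝ (Fin d)) ℂ →L[ℝ] ℂ)
    (V : EuclideanSpace ℝ (Fin d) × EuclideanSpace ℝ (Fin d) → ℂ) : Prop :=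
  ∀ x ξ : EuclideanSpace ℝ (Fin d), ∃ g : SchwartzMap (EuclideanSpace ℝ (Fin d)) ℂ,
    (∀ y, g y = Complex.exp (-(Complex.I * ((inner ℝ y ξ : ℝ) : ℂ))) *
        (starRingEnd ℂ) (φ (y - x))) ∧
    V (x, ξ) = ((2 * Real.pi) ^ (-(d : ℝ) / 2) : ℝ) * u g

lemma schwartz_decay_aux {E : Type*} [NormedAddCommGroup E] [NormedSpace ℝ E]
    (f : SchwartzMap E ℂ) (k : ℕ) :
    ∃ C' : ℝ, 0 ≤ C' ∧ ∀ x, (1 + ‖x‖) ^ (k : ℝ) * ‖f x‖ ≤ C' := by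
  refine ⟨2 ^ k * (Finset.Iic (k, 0)).sup (fun m => SchwartzMap.seminorm ℝ m.1 m.2) f,
    by positivity, fun x => ?_⟩
  have h := SchwartzMap.one_add_le_sup_seminorm_apply (𝕜 := ℝ) (m := (k, 0)) le_rfl le_rfl f x
  rw [norm_iteratedFDeriv_zero] at h
  rw [Real.rpow_natCast]
  exact h


set_option maxHeartbeats 1000000 in
/-- super-polynomial decay of the STFT of the Dirac distribution `δ₀` on a
small anisotropic neighborhood of a set `Ω` contained in `{⟨η⟩ ≤ C⟨y⟩^σ}`. -/
theorem stmt15 (d : ℕ) (σ ρ C : ℝ) (hσ : 0 < σ) (hρ0 : 0 < ρ) (hρ1 : ρ ≤ 1) (hC : 0 < C)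
    (Ω : Set (EuclideanSpace ℝ (Fin d) × EuclideanSpace ℝ (Fin d))) (hΩ : Ω.Nonempty)
    (hsub : Ω ⊆ {w : EuclideanSpace ℝ (Fin d) × EuclideanSpace ℝ (Fin d) |
      Real.sqrt (1 + ‖w.2‖ ^ 2) ≤ C * Real.sqrt (1 + ‖w.1‖ ^ 2) ^ σ})
    (φ : SchwartzMap (EuclideanSpace ℝ (Fin d)) ℂ) (hφ : φ ≠ 0)
    (u : SchwartzMap (EuclideanSpace ℝ (Fin d)) ℂ →L[ℝ] ℂ)
    (hu : ∀ g : SchwartzMap (EuclideanSpace ℝ (Fin d)) ℂ, u g = g 0)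
    (V : EuclideanSpace ℝ (Fin d) × EuclideanSpace ℝ (Fin d) → ℂ)
    (hV : IsSTFT d φ u V) :
    ∃ ε > 0, ∀ N : ℝ, 0 ≤ N → ∃ M : ℝ, ∀ z ∈ aniso d σ ρ ε Ω,
      pairBracket z ^ N * ‖V z‖ ≤ M := by
    -- the key constant
  set K : ℝ := 1 + C ^ (1 / σ) with hKdef
  have hK1 : (1 : ℝ) ≤ K := le_add_of_nonneg_right (Real.rpow_nonneg hC.le _)
  have hK0 : (0 : ℝ) < K := lt_of_lt_of_le one_pos hK1
  set s : ℝ := max σ 1 with hsdef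
  have hs1 : (1 : ℝ) ≤ s := le_max_right _ _
  have hsσ : σ ≤ s := le_max_left _ _
  have hs0 : (0 : ℝ) ≤ s := le_trans zero_le_one hs1
  -- value of V
  have hVval : ∀ z : EuclideanSpace ℝ (Fin d) × EuclideanSpace ℝ (Fin d),
      ‖V z‖ = (2 * Real.pi) ^ (-(d : ℝ) / 2) * ‖φ (-z.1)‖ := by
    intro z
    obtain ⟨g, hg, hVz⟩ := hV z.1 z.2
    have hz : (z.1, z.2) = z := rfl
    rw [hz] at hVz
    have hg0 : g 0 = (starRingEnd ℂ) (φ (-z.1)) := by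
      rw [hg 0]
      simp [inner_zero_left]
    rw [hVz, hu, hg0]
    rw [norm_mul, Complex.norm_real, RCLike.norm_conj, Real.norm_eq_abs,
      abs_of_nonneg (by positivity)]
  refine ⟨1 / (2 * K), by positivity, fun N hN => ?_⟩
  -- global geometric bound on the neighborhood
  set A : ℝ := 1 + (C + K ^ s) * 2 ^ s with hAdef
  have hA0 : (0 : ℝ) ≤ A := by
    have : (0:ℝ) ≤ K ^ s := Real.rpow_nonneg hK0.le _
    have : (0:ℝ) ≤ (2:ℝ) ^ s := Real.rpow_nonneg (by norm_num) _
    positivity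
  have hgeom : ∀ z ∈ aniso d σ ρ (1 / (2 * K)) Ω,
      pairBracket z ≤ A * (1 + ‖z.1‖) ^ s := by
    intro z hz
    obtain ⟨w, hwΩ, h1, h2⟩ := hz
    have hθ1 : (1 : ℝ) ≤ theta d σ w := by
      have h1' : (0:ℝ) ≤ ‖w.1‖ := norm_nonneg _
      have h2' : (0:ℝ) ≤ ‖w.2‖ ^ (1/σ) := Real.rpow_nonneg (norm_nonneg _) _
      unfold theta; linarith
    have hθ0 : (0 : ℝ) ≤ theta d σ w := le_trans zero_le_one hθ1
    -- bound on ‖η‖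
    have hηb : ‖w.2‖ ≤ C * (1 + ‖w.1‖) ^ σ := by
      have h0 := hsub hwΩ
      have ha : ‖w.2‖ ≤ Real.sqrt (1 + ‖w.2‖ ^ 2) := by
        rw [show ‖w.2‖ = Real.sqrt (‖w.2‖^2) from (Real.sqrt_sq (norm_nonneg _)).symm]
        exact Real.sqrt_le_sqrt (by nlinarith [Real.sq_sqrt (show (0:ℝ) ≤ ‖w.2‖^2 by positivity)])
      have hb : Real.sqrt (1 + ‖w.1‖ ^ 2) ≤ 1 + ‖w.1‖ := by
        rw [show (1:ℝ) + ‖w.1‖ = Real.sqrt ((1+‖w.1‖)^2) from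
          (Real.sqrt_sq (by positivity)).symm]
        exact Real.sqrt_le_sqrt (by nlinarith [norm_nonneg w.1])
      have hc : Real.sqrt (1 + ‖w.1‖ ^ 2) ^ σ ≤ (1 + ‖w.1‖) ^ σ :=
        Real.rpow_le_rpow (Real.sqrt_nonneg _) hb hσ.le
      calc ‖w.2‖ ≤ Real.sqrt (1 + ‖w.2‖ ^ 2) := ha
        _ ≤ C * Real.sqrt (1 + ‖w.1‖ ^ 2) ^ σ := h0
        _ ≤ C * (1 + ‖w.1‖) ^ σ := by nlinarith
    -- bound on θ
    have hθle : theta d σ w ≤ K * (1 + ‖w.1‖) := by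
      have h1' : ‖w.2‖ ^ (1/σ) ≤ (C * (1 + ‖w.1‖) ^ σ) ^ (1/σ) :=
        Real.rpow_le_rpow (norm_nonneg _) hηb (by positivity)
      have h2' : (C * (1 + ‖w.1‖) ^ σ) ^ (1/σ) = C ^ (1/σ) * (1 + ‖w.1‖) := by
        rw [Real.mul_rpow hC.le (Real.rpow_nonneg (by positivity) _),
          ← Real.rpow_mul (by positivity), mul_one_div_cancel hσ.ne', Real.rpow_one]
      have hn : (0:ℝ) ≤ ‖w.1‖ := norm_nonneg _
      have hcs : (0:ℝ) ≤ C ^ (1/σ) := Real.rpow_nonneg hC.le _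
      unfold theta
      rw [hKdef]
      nlinarith [h2' ▸ h1']
    -- bound on ‖z.1 - w.1‖
    have hρθ : theta d σ w ^ ρ ≤ theta d σ w := by
      nth_rewrite 2 [show theta d σ w = theta d σ w ^ (1:ℝ) from (Real.rpow_one _).symm]
      exact Real.rpow_le_rpow_of_exponent_le hθ1 hρ1
    have hx : ‖z.1 - w.1‖ < (1 + ‖w.1‖) / 2 := by
      calc ‖z.1 - w.1‖ < 1 / (2*K) * theta d σ w ^ ρ := h1
        _ ≤ 1 / (2*K) * (K * (1 + ‖w.1‖)) := by
            apply mul_le_mul_of_nonneg_left (le_trans hρθ hθle) (by positivity)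
        _ = (1 + ‖w.1‖) / 2 := by field_simp
    have hy2x : 1 + ‖w.1‖ ≤ 2 * (1 + ‖z.1‖) := by
      have := norm_sub_norm_le w.1 z.1
      have hrev : ‖w.1 - z.1‖ = ‖z.1 - w.1‖ := norm_sub_rev _ _
      linarith [this, hrev ▸ hx]
    -- bound on ‖z.2‖
    have hρσs : ρ * σ ≤ s := le_trans (by nlinarith) hsσ
    have hθs : theta d σ w ^ (ρ * σ) ≤ theta d σ w ^ s :=
      Real.rpow_le_rpow_of_exponent_le hθ1 hρσs
    have hθss : theta d σ w ^ s ≤ K ^ s * (1 + ‖w.1‖) ^ s := by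
      rw [← Real.mul_rpow hK0.le (by positivity)]
      exact Real.rpow_le_rpow hθ0 hθle hs0
    have hyσs : (1 + ‖w.1‖) ^ σ ≤ (1 + ‖w.1‖) ^ s :=
      Real.rpow_le_rpow_of_exponent_le (by nlinarith [norm_nonneg w.1]) hsσ
    have hε1 : (1:ℝ) / (2*K) ≤ 1 := by
      rw [div_le_one (by positivity)]; linarith
    have hξ : ‖z.2‖ ≤ (C + K ^ s) * (1 + ‖w.1‖) ^ s := by
      have ht : ‖z.2‖ ≤ ‖w.2‖ + ‖z.2 - w.2‖ := by
        have h := norm_add_le (z.2 - w.2) w.2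
        simp only [sub_add_cancel] at h; linarith
      have h2' : ‖z.2 - w.2‖ ≤ K ^ s * (1 + ‖w.1‖) ^ s := by
        have hKs0 : (0:ℝ) ≤ theta d σ w ^ (ρ*σ) := Real.rpow_nonneg hθ0 _
        calc ‖z.2 - w.2‖ ≤ 1 / (2*K) * theta d σ w ^ (ρ*σ) := h2.le
          _ ≤ 1 * theta d σ w ^ (ρ*σ) := mul_le_mul_of_nonneg_right hε1 hKs0
          _ = theta d σ w ^ (ρ*σ) := one_mul _
          _ ≤ theta d σ w ^ s := hθs
          _ ≤ K ^ s * (1 + ‖w.1‖) ^ s := hθss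
      have hcy : ‖w.2‖ ≤ C * (1 + ‖w.1‖) ^ s := by nlinarith
      nlinarith
    have hξx : ‖z.2‖ ≤ (C + K ^ s) * 2 ^ s * (1 + ‖z.1‖) ^ s := by
      have h2s : (1 + ‖w.1‖) ^ s ≤ (2 * (1 + ‖z.1‖)) ^ s :=
        Real.rpow_le_rpow (by positivity) hy2x hs0
      have hmul : ((2:ℝ) * (1 + ‖z.1‖)) ^ s = 2 ^ s * (1 + ‖z.1‖) ^ s :=
        Real.mul_rpow (by norm_num) (by positivity)
      have hCK : (0:ℝ) ≤ C + K ^ s := by positivity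
      calc ‖z.2‖ ≤ (C + K ^ s) * (1 + ‖w.1‖) ^ s := hξ
        _ ≤ (C + K ^ s) * (2 ^ s * (1 + ‖z.1‖) ^ s) := by
            apply mul_le_mul_of_nonneg_left (hmul ▸ h2s) hCK
        _ = (C + K ^ s) * 2 ^ s * (1 + ‖z.1‖) ^ s := by ring
    -- assemble
    have hbr : pairBracket z ≤ 1 + ‖z.1‖ + ‖z.2‖ := by
      unfold pairBracket
      rw [show (1:ℝ) + ‖z.1‖ + ‖z.2‖ = Real.sqrt ((1 + ‖z.1‖ + ‖z.2‖)^2) from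
        (Real.sqrt_sq (by positivity)).symm]
      exact Real.sqrt_le_sqrt (by nlinarith [norm_nonneg z.1, norm_nonneg z.2])
    have hxs : 1 + ‖z.1‖ ≤ (1 + ‖z.1‖) ^ s := by
      nth_rewrite 1 [show (1:ℝ) + ‖z.1‖ = (1 + ‖z.1‖) ^ (1:ℝ) from (Real.rpow_one _).symm]
      exact Real.rpow_le_rpow_of_exponent_le (by nlinarith [norm_nonneg z.1]) hs1
    calc pairBracket z ≤ 1 + ‖z.1‖ + ‖z.2‖ := hbr
      _ ≤ (1 + ‖z.1‖) ^ s + (C + K ^ s) * 2 ^ s * (1 + ‖z.1‖) ^ s := by linarith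
      _ = A * (1 + ‖z.1‖) ^ s := by rw [hAdef]; ring
  -- Schwartz decay with exponent k ≥ s*N
  obtain ⟨C', hC'0, hC'⟩ := schwartz_decay_aux φ ⌈s * N⌉₊
  refine ⟨A ^ N * (2 * Real.pi) ^ (-(d : ℝ) / 2) * C', fun z hz => ?_⟩
  have hx1 : (1:ℝ) ≤ 1 + ‖z.1‖ := by nlinarith [norm_nonneg z.1]
  have hkx : (1 + ‖z.1‖) ^ (s * N) ≤ (1 + ‖z.1‖) ^ ((⌈s * N⌉₊ : ℕ) : ℝ) :=
    Real.rpow_le_rpow_of_exponent_le hx1 (Nat.le_ceil _)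
  have hpb0 : (0:ℝ) ≤ pairBracket z := Real.sqrt_nonneg _
  have hπ0 : (0:ℝ) ≤ (2 * Real.pi) ^ (-(d : ℝ) / 2) := by positivity
  have hφx := hC' (-z.1)
  rw [norm_neg] at hφx
  have step1 : pairBracket z ^ N ≤ A ^ N * (1 + ‖z.1‖) ^ (s * N) := by
    calc pairBracket z ^ N ≤ (A * (1 + ‖z.1‖) ^ s) ^ N :=
          Real.rpow_le_rpow hpb0 (hgeom z hz) hN
      _ = A ^ N * ((1 + ‖z.1‖) ^ s) ^ N := Real.mul_rpow hA0 (by positivity)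
      _ = A ^ N * (1 + ‖z.1‖) ^ (s * N) := by
          rw [← Real.rpow_mul (by positivity)]
  calc pairBracket z ^ N * ‖V z‖
      = pairBracket z ^ N * ((2 * Real.pi) ^ (-(d : ℝ) / 2) * ‖φ (-z.1)‖) := by rw [hVval z]
    _ ≤ (A ^ N * (1 + ‖z.1‖) ^ (s * N)) * ((2 * Real.pi) ^ (-(d : ℝ) / 2) * ‖φ (-z.1)‖) := by
        apply mul_le_mul_of_nonneg_right step1 (by positivity)
    _ = A ^ N * (2 * Real.pi) ^ (-(d : ℝ) / 2) * ((1 + ‖z.1‖) ^ (s * N) * ‖φ (-z.1)‖) := by ring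
    _ ≤ A ^ N * (2 * Real.pi) ^ (-(d : ℝ) / 2) * ((1 + ‖z.1‖) ^ ((⌈s * N⌉₊ : ℕ) : ℝ) * ‖φ (-z.1)‖) := by
        apply mul_le_mul_of_nonneg_left _ (by positivity)
        exact mul_le_mul_of_nonneg_right hkx (norm_nonneg _)
    _ ≤ A ^ N * (2 * Real.pi) ^ (-(d : ℝ) / 2) * C' := by
        apply mul_le_mul_of_nonneg_left hφx (by positivity)
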